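/- Let Λ be a locally compact Hausdorff space equipped with a continuous free action of the circle group 𝕋 = {α ∈ ℂ : |α| = 1} (free meaning tλ = λ implies t = 1). Let E := {f ∈ C₀(Λ,ℂ) : f(tλ) = t·f(λ) for all t ∈ 𝕋, λ ∈ Λ} and C₀¹(Λ) := {f ∈ C₀(Λ,ℂ) : f(tλ) = f(λ) for all t ∈ 𝕋, λ ∈ Λ}. Then the norm-closed linear span of the set {a̅·b : a,b ∈ E} (pointwise complex conjugate of a times b) coincides with C₀¹(Λ). -/

import Mathlib

/-!
STATEMENT 18: Let `Λ` be a locally compact Hausdorff space with a continuous free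
action of the circle group `𝕋`.  Let
`E := {f ∈ C₀(Λ,ℂ) : f(tλ) = t·f(λ)}` and `C₀¹(Λ) := {f ∈ C₀(Λ,ℂ) : f(tλ) = f(λ)}`.
Then the norm-closed linear span of `{a̅·b : a,b ∈ E}` coincides with `C₀¹(Λ)`.
-/

open scoped ZeroAtInfty ComplexConjugate
set_option linter.unusedSectionVars false

noncomputable section

variable (Λ : Type*) [TopologicalSpace Λ] [LocallyCompactSpace Λ] [T2Space Λ]
  [MulAction Circle Λ] [ContinuousSMul Circle Λ]

/-- `E = C₀^𝕋(Λ)`: the functions in `C₀(Λ,ℂ)` with `f(tλ) = t f(λ)`. -/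
def ET : Set C₀(Λ, ℂ) :=
  {f | ∀ (t : Circle) (l : Λ), f (t • l) = (t : ℂ) * f l}

/-- `C₀¹(Λ)`: the `𝕋`-invariant functions in `C₀(Λ,ℂ)`. -/
def CinvT : Set C₀(Λ, ℂ) :=
  {f | ∀ (t : Circle) (l : Λ), f (t • l) = f l}

noncomputable instance : MeasurableSpace Circle := borel Circle
instance : BorelSpace Circle := ⟨rfl⟩

namespace Aux18

open MeasureTheory ZeroAtInftyContinuousMap

local notation "μH" => (MeasureTheory.Measure.haar : Measure Circle)

variable {Λ}

lemma norm_apply_le (f : C₀(Λ, ℂ)) (x : Λ) : ‖f x‖ ≤ ‖f‖ := by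
  rw [← norm_toBCF_eq_norm]; exact f.toBCF.norm_coe_le_norm x

lemma eval_continuous (x : Λ) : Continuous fun f : C₀(Λ, ℂ) => f x := by
  refine (LipschitzWith.of_dist_le_mul (K := 1) fun f g => ?_).continuous
  rw [dist_eq_norm, dist_eq_norm, NNReal.coe_one, one_mul]
  exact (show ‖f x - g x‖ = ‖(f - g) x‖ by rfl) ▸ norm_apply_le (f - g) x

lemma isClosed_CinvT : IsClosed (CinvT Λ) := by
  have h : CinvT Λ = ⋂ (t : Circle) (l : Λ), {f : C₀(Λ, ℂ) | f (t • l) = f l} := by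
    ext f; simp [CinvT, Set.mem_iInter]
  rw [h]
  exact isClosed_iInter fun t => isClosed_iInter fun l =>
    isClosed_eq (eval_continuous _) (eval_continuous _)

lemma coe_mul_self_eq_one (t : Circle) : star (t : ℂ) * (t : ℂ) = 1 := by
  rw [Complex.star_def, mul_comm, Complex.mul_conj, Circle.normSq_coe, Complex.ofReal_one]


lemma integrable_cont {g : Circle → ℂ} (hg : Continuous g) : Integrable g μH :=
  hg.integrable_of_hasCompactSupport (HasCompactSupport.of_compactSpace g)

lemma integrable_cont' {g : Circle → ℝ} (hg : Continuous g) : Integrable g μH :=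
  hg.integrable_of_hasCompactSupport (HasCompactSupport.of_compactSpace g)

/-- The key construction: an equivariant function not vanishing at a given point. -/
lemma exists_ET_ne_zero (hfree : ∀ (t : Circle) (l : Λ), t • l = l → t = 1) (l₀ : Λ) :
    ∃ a ∈ ET Λ, a l₀ ≠ 0 := by
  classical
  -- the bad arc and its orbit image
  set C : Set Circle := {t | (t : ℂ).re ≤ 1 / 2} with hC
  have hCclosed : IsClosed C :=
    isClosed_le (Complex.continuous_re.comp continuous_subtype_val) continuous_const
  have horbit : Continuous fun t : Circle => t • l₀ := continuous_id.smul continuous_const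
  set Cl : Set Λ := (fun t : Circle => t • l₀) '' C with hCl
  have hClcomp : IsCompact Cl := (hCclosed.isCompact).image horbit
  have hl₀ : l₀ ∉ Cl := by
    rintro ⟨t, htC, ht⟩
    have h1 := hfree t l₀ ht
    rw [h1] at htC
    simp only [hC, Set.mem_setOf_eq, Circle.coe_one, Complex.one_re] at htC
    norm_num at htC
  -- Urysohn bump
  obtain ⟨χ, hχ1, hχ0, hχc, hχmem⟩ :=
    exists_continuous_one_zero_of_isCompact (isCompact_singleton (x := l₀)) hClcomp.isClosed
      (Set.disjoint_left.mpr fun x hx => by rwa [Set.mem_singleton_iff.mp hx])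
  have hχnonneg : ∀ x, 0 ≤ χ x := fun x => (hχmem x).1
  -- if χ(t • l₀) ≠ 0 then re t > 1/2
  have hre : ∀ t : Circle, χ (t • l₀) ≠ 0 → 1 / 2 < (t : ℂ).re := by
    intro t ht
    by_contra hcon
    exact ht (hχ0 ⟨t, not_lt.mp hcon, rfl⟩)
  -- the integrand as a continuous function on Λ × Circle
  have hGcont : Continuous fun p : Λ × Circle => star ((p.2 : Circle) : ℂ) * ((χ (p.2 • p.1) : ℝ) : ℂ) :=
    (continuous_star.comp (continuous_subtype_val.comp continuous_snd)).mul
      (Complex.continuous_ofReal.comp (χ.continuous.comp (show Continuous fun p : Λ × Circle => p.2 • p.1 from continuous_snd.smul continuous_fst)))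
  set G : C(Λ × Circle, ℂ) := ⟨_, hGcont⟩ with hGdef
  set a₀ : Λ → ℂ := fun μ => ∫ t : Circle, star ((t : Circle) : ℂ) * ((χ (t • μ) : ℝ) : ℂ) ∂μH
    with ha₀
  have hsmul : ∀ μ : Λ, Continuous fun t : Circle => t • μ := fun μ =>
    continuous_id.smul continuous_const
  have hint : ∀ μ : Λ, Integrable (fun t : Circle => star ((t : Circle) : ℂ) * ((χ (t • μ) : ℝ) : ℂ)) μH := by
    intro μ
    refine integrable_cont ?_
    exact (continuous_star.comp continuous_subtype_val).mul
      (Complex.continuous_ofReal.comp (χ.continuous.comp (hsmul μ)))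
  -- continuity
  have hLip : LipschitzWith ⟨(μH Set.univ).toReal, ENNReal.toReal_nonneg⟩
      (fun g : C(Circle, ℂ) => ∫ t, g t ∂μH) := by
    refine LipschitzWith.of_dist_le_mul fun g₁ g₂ => ?_
    have hgi : ∀ g : C(Circle, ℂ), Integrable (fun t => g t) μH := fun g => integrable_cont g.continuous
    rw [dist_eq_norm, ← integral_sub (hgi g₁) (hgi g₂)]
    have := norm_integral_le_of_norm_le_const (μ := μH)
      (f := fun t => g₁ t - g₂ t) (C := dist g₁ g₂)
      (Filter.Eventually.of_forall fun t => by
        rw [← dist_eq_norm]; exact ContinuousMap.dist_apply_le_dist t)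
    calc ‖∫ t, (g₁ t - g₂ t) ∂μH‖ ≤ dist g₁ g₂ * (μH Set.univ).toReal := this
      _ = _ := mul_comm _ _
  have ha₀cont : Continuous a₀ := by
    have h := hLip.continuous.comp (ContinuousMap.curry G).continuous
    exact h
  -- equivariance
  have ha₀equi : ∀ (s : Circle) (μ : Λ), a₀ (s • μ) = (s : ℂ) * a₀ μ := by
    intro s μ
    have hss : (s : ℂ) * star (s : ℂ) = 1 := by
      rw [mul_comm]; exact coe_mul_self_eq_one s
    have h1 : (fun t : Circle => star ((t : Circle) : ℂ) * ((χ (t • (s • μ)) : ℝ) : ℂ))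
        = fun t : Circle =>
          (fun u : Circle => (s : ℂ) • (star ((u : Circle) : ℂ) * ((χ (u • μ) : ℝ) : ℂ))) (t * s) := by
      funext t
      simp only [smul_eq_mul, Circle.coe_mul, star_mul, smul_smul]
      calc star ((t : Circle) : ℂ) * ((χ ((t * s) • μ) : ℝ) : ℂ)
          = ((s : ℂ) * star (s : ℂ)) * (star ((t : Circle) : ℂ) * ((χ ((t * s) • μ) : ℝ) : ℂ)) := by
            rw [hss, one_mul]
        _ = (s : ℂ) * (star ((s : Circle) : ℂ) * star ((t : Circle) : ℂ) * ((χ ((t * s) • μ) : ℝ) : ℂ)) := by ring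
    rw [ha₀]
    simp only [h1]
    rw [integral_mul_right_eq_self
      (fun u : Circle => (s : ℂ) • (star ((u : Circle) : ℂ) * ((χ (u • μ) : ℝ) : ℂ))) s,
      integral_smul, smul_eq_mul]
  -- vanishing off a compact set
  set C₂ : Set Λ := (fun p : Circle × Λ => p.1 • p.2) '' (Set.univ ×ˢ tsupport χ) with hC₂
  have hC₂comp : IsCompact C₂ := (isCompact_univ.prod hχc).image continuous_smul
  have hvanish : ∀ μ : Λ, μ ∉ C₂ → a₀ μ = 0 := by
    intro μ hμ
    have hzero : ∀ t : Circle, χ (t • μ) = 0 := by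
      intro t
      by_contra h
      exact hμ ⟨(t⁻¹, t • μ), ⟨Set.mem_univ _, subset_tsupport χ h⟩, by simp [smul_smul]⟩
    rw [ha₀]
    simp only [hzero, Complex.ofReal_zero, mul_zero, integral_zero]
  have ha₀zero : Filter.Tendsto a₀ (Filter.cocompact Λ) (nhds 0) := by
    refine Filter.Tendsto.congr' ?_ tendsto_const_nhds
    refine Filter.eventuallyEq_of_mem ?_ fun μ hμ => (hvanish μ hμ).symm
    exact Filter.mem_cocompact.mpr ⟨C₂, hC₂comp, le_refl _⟩
  -- positivity of the real part at l₀
  have hχl₀ : χ l₀ = 1 := hχ1 rfl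
  have hrepos : 0 < (a₀ l₀).re := by
    have hre0 : (a₀ l₀).re
        = ∫ t : Circle, (star ((t : Circle) : ℂ) * ((χ (t • l₀) : ℝ) : ℂ)).re ∂μH :=
      (Complex.reCLM.integral_comp_comm (hint l₀)).symm
    have hre' : (a₀ l₀).re = ∫ t : Circle, ((t : ℂ).re * χ (t • l₀)) ∂μH := by
      rw [hre0]
      congr 1
      funext t
      simp [Complex.mul_re, Complex.star_def]
    rw [hre']
    have hintre : Integrable (fun t : Circle => (t : ℂ).re * χ (t • l₀)) μH :=
      integrable_cont' ((Complex.continuous_re.comp continuous_subtype_val).mul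
        (χ.continuous.comp (hsmul l₀)))
    have hinthalf : Integrable (fun t : Circle => (1 / 2 : ℝ) * χ (t • l₀)) μH :=
      integrable_cont' (continuous_const.mul (χ.continuous.comp (hsmul l₀)))
    have hmono : ∀ t : Circle, (1 / 2 : ℝ) * χ (t • l₀) ≤ (t : ℂ).re * χ (t • l₀) := by
      intro t
      rcases eq_or_ne (χ (t • l₀)) 0 with h | h
      · simp [h]
      · exact mul_le_mul_of_nonneg_right (le_of_lt (hre t h)) (hχnonneg _)
    have hposhalf : 0 < ∫ t : Circle, (1 / 2 : ℝ) * χ (t • l₀) ∂μH := by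
      rw [integral_const_mul]
      refine mul_pos (by norm_num) ?_
      refine (integral_pos_iff_support_of_nonneg (f := fun t : Circle => χ (t • l₀))
        (fun t => hχnonneg _) (integrable_cont' (χ.continuous.comp (hsmul l₀)))).mpr ?_
      refine (IsOpen.measure_pos μH ?_ ⟨1, ?_⟩)
      · exact isOpen_ne_fun (χ.continuous.comp (hsmul l₀)) continuous_const
      · simp [Function.mem_support, one_smul, hχl₀]
    exact lt_of_lt_of_le hposhalf (integral_mono hinthalf hintre hmono)
  -- package it up
  refine ⟨⟨⟨a₀, ha₀cont⟩, ha₀zero⟩, ?_, ?_⟩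
  · intro t l
    exact ha₀equi t l
  · intro h
    have : (a₀ l₀).re = 0 := by
      have : a₀ l₀ = 0 := h
      rw [this]; simp
    rw [this] at hrepos; exact lt_irrefl 0 hrepos


lemma norm_circle_coe (t : Circle) : ‖(t : ℂ)‖ = 1 := by
  rw [Circle.norm_coe]

lemma star_mul_self_eq (z : ℂ) : star z * z = ((‖z‖ ^ 2 : ℝ) : ℂ) := by
  rw [Complex.star_def, mul_comm, Complex.mul_conj, Complex.normSq_eq_norm_sq]

lemma sum_apply {ι : Type*} (T : Finset ι) (g : ι → C₀(Λ, ℂ)) (x : Λ) :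
    (∑ i ∈ T, g i) x = ∑ i ∈ T, g i x := by
  classical
  induction T using Finset.cons_induction with
  | empty => rfl
  | cons i T hi ih => rw [Finset.sum_cons, Finset.sum_cons, ← ih]; rfl

end Aux18

/-- The norm-closed linear span of `{a̅·b : a,b ∈ E}` equals `C₀¹(Λ)`. -/
theorem closure_span_conj_mul_eq_invariants
    (hfree : ∀ (t : Circle) (l : Λ), t • l = l → t = 1) :
    closure (Submodule.span ℂ
        {x : C₀(Λ, ℂ) | ∃ a ∈ ET Λ, ∃ b ∈ ET Λ, x = star a * b} : Set C₀(Λ, ℂ))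
      = CinvT Λ := by
  classical
  set S : Set C₀(Λ, ℂ) := {x : C₀(Λ, ℂ) | ∃ a ∈ ET Λ, ∃ b ∈ ET Λ, x = star a * b} with hS
  apply Set.Subset.antisymm
  · -- closure of the span is contained in the invariant functions
    refine closure_minimal ?_ (Aux18.isClosed_CinvT)
    have hmem : S ⊆ CinvT Λ := by
      rintro x ⟨a, ha, b, hb, rfl⟩ t l
      have h1 : (star a * b) (t • l) = star (a (t • l)) * b (t • l) := rfl
      have h2 : (star a * b) l = star (a l) * b l := rfl
      rw [h1, h2, ha, hb]
      have h3 : star ((t : ℂ) * a l) * ((t : ℂ) * b l)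
          = (star (t : ℂ) * (t : ℂ)) * (star (a l) * b l) := by
        rw [star_mul]; ring
      rw [h3, Aux18.coe_mul_self_eq_one, one_mul]
    let M : Submodule ℂ C₀(Λ, ℂ) :=
      { carrier := CinvT Λ
        add_mem' := fun {f g} hf hg t l => by
          have h1 : (f + g) (t • l) = f (t • l) + g (t • l) := rfl
          have h2 : (f + g) l = f l + g l := rfl
          rw [h1, h2, hf t l, hg t l]
        zero_mem' := fun t l => rfl
        smul_mem' := fun c f hf t l => by
          have h1 : (c • f) (t • l) = c • f (t • l) := rfl
          have h2 : (c • f) l = c • f l := rfl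
          rw [h1, h2, hf t l] }
    exact Submodule.span_le (p := M).mpr hmem
  · -- every invariant function lies in the closure
    intro f hf
    rw [Metric.mem_closure_iff]
    intro ε hε
    -- the compact set where `f` is not small
    set K : Set Λ := {μ | ε / 2 ≤ ‖f μ‖} with hK
    have hKclosed : IsClosed K :=
      isClosed_le continuous_const (continuous_norm.comp (map_continuous f))
    obtain ⟨D, hDcomp, hDsub⟩ : ∃ D : Set Λ, IsCompact D ∧ K ⊆ D := by
      have h2 : ⇑f ⁻¹' Metric.ball (0 : ℂ) (ε / 2) ∈ Filter.cocompact Λ :=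
        (zero_at_infty f) (Metric.ball_mem_nhds 0 (by positivity))
      obtain ⟨D, hD1, hD2⟩ := Filter.mem_cocompact.mp h2
      refine ⟨D, hD1, fun μ hμ => ?_⟩
      by_contra hc
      have h3 := hD2 hc
      simp only [Set.mem_preimage, Metric.mem_ball, dist_zero_right] at h3
      have h4 : ε / 2 ≤ ‖f μ‖ := hμ
      linarith
    have hKcomp : IsCompact K := hDcomp.of_isClosed_subset hKclosed hDsub
    -- for each point, choose a normalized equivariant function
    have hpoint : ∀ l : Λ, ∃ b ∈ ET Λ, ‖b l‖ = 1 := by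
      intro l
      obtain ⟨a, haET, hane⟩ := Aux18.exists_ET_ne_zero hfree l
      refine ⟨((‖a l‖ : ℂ))⁻¹ • a, ?_, ?_⟩
      · intro t x
        have h1 : (((‖a l‖ : ℂ))⁻¹ • a) (t • x) = ((‖a l‖ : ℂ))⁻¹ • a (t • x) := rfl
        have h2 : (((‖a l‖ : ℂ))⁻¹ • a) x = ((‖a l‖ : ℂ))⁻¹ • a x := rfl
        rw [h1, h2, haET t x, smul_eq_mul, smul_eq_mul]
        ring
      · have h2 : (((‖a l‖ : ℂ))⁻¹ • a) l = ((‖a l‖ : ℂ))⁻¹ • a l := rfl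
        have hna : ‖a l‖ ≠ 0 := norm_ne_zero_iff.mpr hane
        rw [h2, norm_smul, norm_inv, Complex.norm_real, Real.norm_eq_abs,
          abs_of_nonneg (norm_nonneg _), inv_mul_cancel₀ hna]
    choose b hbET hbnorm using hpoint
    -- an open cover of K
    set U : Λ → Set Λ := fun l => {μ | 1 / 2 < ‖b l μ‖} with hU
    have hUopen : ∀ l : Λ, IsOpen (U l) :=
      fun l => isOpen_lt continuous_const (continuous_norm.comp (map_continuous (b l)))
    have hcover : K ⊆ ⋃ l ∈ K, U l := by
      intro μ hμ
      refine Set.mem_biUnion hμ ?_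
      simp only [hU, Set.mem_setOf_eq, hbnorm μ]
      norm_num
    obtain ⟨T, hTK, hTfin, hTcover⟩ :=
      hKcomp.elim_finite_subcover_image (fun l _ => hUopen l) hcover
    set F : Finset Λ := hTfin.toFinset with hF
    have hFmem : ∀ l : Λ, l ∈ F ↔ l ∈ T := fun l => Set.Finite.mem_toFinset hTfin
    -- the invariant envelope function
    set H : Λ → ℝ := fun μ => ∑ i ∈ F, ‖b i μ‖ ^ 2 with hH
    have hHcont : Continuous H := by
      refine continuous_finset_sum F fun i _ => ?_
      exact (continuous_norm.comp (map_continuous (b i))).pow 2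
    have hHnonneg : ∀ μ, 0 ≤ H μ :=
      fun μ => Finset.sum_nonneg fun i _ => sq_nonneg _
    have hHinv : ∀ (t : Circle) (μ : Λ), H (t • μ) = H μ := by
      intro t μ
      refine Finset.sum_congr rfl fun i _ => ?_
      rw [hbET i t μ, norm_mul, Aux18.norm_circle_coe, one_mul]
    have hHK : ∀ μ ∈ K, 1 / 4 ≤ H μ := by
      intro μ hμ
      obtain ⟨l, hlT, hlU⟩ := Set.mem_iUnion₂.mp (hTcover hμ)
      have h1 : (1 / 2 : ℝ) < ‖b l μ‖ := hlU
      have h2 : (1 / 4 : ℝ) ≤ ‖b l μ‖ ^ 2 := by nlinarith [norm_nonneg (b l μ)]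
      refine le_trans h2 ?_
      exact Finset.single_le_sum (fun i _ => sq_nonneg (‖b i μ‖)) ((hFmem l).mpr hlT)
    -- the weight function
    set w : Λ → ℝ := fun μ => (max (H μ) (1 / 4))⁻¹ with hw
    have hmaxpos : ∀ μ, 0 < max (H μ) (1 / 4) :=
      fun μ => lt_of_lt_of_le (by norm_num) (le_max_right _ _)
    have hwcont : Continuous w :=
      ((hHcont.max continuous_const).inv₀ fun μ => ne_of_gt (hmaxpos μ))
    have hwnonneg : ∀ μ, 0 ≤ w μ := fun μ => inv_nonneg.mpr (le_of_lt (hmaxpos μ))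
    have hwle : ∀ μ, w μ ≤ 4 := by
      intro μ
      rw [hw]
      have h1 : (1 / 4 : ℝ) ≤ max (H μ) (1 / 4) := le_max_right _ _
      calc (max (H μ) (1 / 4))⁻¹ ≤ (1 / 4 : ℝ)⁻¹ :=
            inv_anti₀ (by norm_num) h1
        _ = 4 := by norm_num
    have hwinv : ∀ (t : Circle) (μ : Λ), w (t • μ) = w μ := by
      intro t μ; simp only [hw, hHinv t μ]
    have hwH_le_one : ∀ μ, w μ * H μ ≤ 1 := by
      intro μ
      rw [hw]
      rw [inv_mul_le_iff₀ (hmaxpos μ), mul_one]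
      exact le_max_left _ _
    have hwH_nonneg : ∀ μ, 0 ≤ w μ * H μ := fun μ => mul_nonneg (hwnonneg μ) (hHnonneg μ)
    -- the truncated function f·w as an element of C₀
    have hfscont : Continuous fun μ : Λ => f μ * ((w μ : ℝ) : ℂ) :=
      (map_continuous f).mul (Complex.continuous_ofReal.comp hwcont)
    have hfszero : Filter.Tendsto (fun μ : Λ => f μ * ((w μ : ℝ) : ℂ))
        (Filter.cocompact Λ) (nhds 0) := by
      rw [tendsto_zero_iff_norm_tendsto_zero]
      have hb4 : Filter.Tendsto (fun μ : Λ => ‖f μ‖ * 4) (Filter.cocompact Λ) (nhds 0) := by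
        have := (tendsto_zero_iff_norm_tendsto_zero.mp
          (zero_at_infty f)).mul_const (4 : ℝ)
        simpa using this
      refine squeeze_zero (fun μ => norm_nonneg _) (fun μ => ?_) hb4
      rw [norm_mul, Complex.norm_real, Real.norm_eq_abs, abs_of_nonneg (hwnonneg μ)]
      exact mul_le_mul_of_nonneg_left (hwle μ) (norm_nonneg _)
    set fs : C₀(Λ, ℂ) := ⟨⟨fun μ => f μ * ((w μ : ℝ) : ℂ), hfscont⟩, hfszero⟩ with hfs
    have hfsapp : ∀ μ : Λ, fs μ = f μ * ((w μ : ℝ) : ℂ) := fun μ => rfl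
    have hfsinv : ∀ (t : Circle) (μ : Λ), fs (t • μ) = fs μ := by
      intro t μ
      rw [hfsapp, hfsapp, hf t μ, hwinv t μ]
    -- the approximating element of the span
    set g : C₀(Λ, ℂ) := ∑ i ∈ F, star (b i) * (fs * b i) with hg
    have hgspan : g ∈ Submodule.span ℂ S := by
      refine Submodule.sum_mem _ fun i _ => ?_
      refine Submodule.subset_span ?_
      refine ⟨b i, hbET i, fs * b i, ?_, rfl⟩
      intro t l
      have h1 : (fs * b i) (t • l) = fs (t • l) * b i (t • l) := rfl
      have h2 : (fs * b i) l = fs l * b i l := rfl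
      rw [h1, h2, hfsinv t l, hbET i t l]
      ring
    have hgapp : ∀ μ : Λ, g μ = f μ * ((w μ * H μ : ℝ) : ℂ) := by
      intro μ
      rw [hg, Aux18.sum_apply]
      have hterm : ∀ i : Λ, (star (b i) * (fs * b i)) μ
          = f μ * ((w μ : ℝ) : ℂ) * ((‖b i μ‖ ^ 2 : ℝ) : ℂ) := by
        intro i
        have h1 : (star (b i) * (fs * b i)) μ = star (b i μ) * (fs μ * b i μ) := rfl
        rw [h1, hfsapp]
        calc star (b i μ) * (f μ * ((w μ : ℝ) : ℂ) * b i μ)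
            = f μ * ((w μ : ℝ) : ℂ) * (star (b i μ) * b i μ) := by ring
          _ = f μ * ((w μ : ℝ) : ℂ) * ((‖b i μ‖ ^ 2 : ℝ) : ℂ) := by
              rw [Aux18.star_mul_self_eq]
      rw [Finset.sum_congr rfl fun i _ => hterm i, ← Finset.mul_sum, hH]
      push_cast
      ring
    -- the estimate
    have hbound : ∀ μ : Λ, ‖(f - g) μ‖ ≤ ε / 2 := by
      intro μ
      have hsub : (f - g) μ = f μ - g μ := rfl
      rw [hsub, hgapp μ]
      have h1 : f μ - f μ * ((w μ * H μ : ℝ) : ℂ) = f μ * ((1 - w μ * H μ : ℝ) : ℂ) := by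
        push_cast; ring
      rw [h1, norm_mul]
      by_cases hμ : μ ∈ K
      · have hmax : max (H μ) (1 / 4) = H μ := max_eq_left (le_trans (by norm_num) (hHK μ hμ))
        have hHne : H μ ≠ 0 := by
          have := hHK μ hμ; intro h; rw [h] at this; norm_num at this
        have hwH : w μ * H μ = 1 := by rw [hw]; simp only [hmax]; field_simp
        rw [hwH]
        simp
        positivity
      · have h2 : ‖f μ‖ < ε / 2 := by
          by_contra hc
          exact hμ (le_of_not_gt hc)
        have h3 : ‖((1 - w μ * H μ : ℝ) : ℂ)‖ ≤ 1 := by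
          rw [Complex.norm_real, Real.norm_eq_abs, abs_le]
          constructor
          · nlinarith [hwH_le_one μ]
          · nlinarith [hwH_nonneg μ]
        calc ‖f μ‖ * ‖((1 - w μ * H μ : ℝ) : ℂ)‖ ≤ ‖f μ‖ * 1 :=
              mul_le_mul_of_nonneg_left h3 (norm_nonneg _)
          _ = ‖f μ‖ := mul_one _
          _ ≤ ε / 2 := le_of_lt h2
    refine ⟨g, hgspan, ?_⟩
    rw [dist_eq_norm]
    have hfg : ‖f - g‖ ≤ ε / 2 := by
      rw [← ZeroAtInftyContinuousMap.norm_toBCF_eq_norm]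
      exact (BoundedContinuousFunction.norm_le (by positivity)).mpr hbound
    linarith
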